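/- arXiv:1806.09246 — 2 statements merged into one kernel-verified Lean document; each statement's English description precedes it below -/
import Mathlib

section
/- Let v ∈ ℂ^N. Consider all vectors f ∈ ℂ^N of the form f = d·a where d ≥ 0 is real and a ∈ ℂ^N satisfies |a_k| = 1/√N for every k. Then the vector f̂ with entries f̂_k = (‖v‖₁/N)·e^{i·arg(v_k)} is of this form (with d = ‖v‖₁/√N and a_k = (1/√N)e^{i·arg(v_k)}), and for every such f one has ‖v − f̂‖₂ ≤ ‖v − f‖₂; moreover ‖v − f̂‖₂² = ‖v‖₂² − ‖v‖₁²/N. -/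
/-! Write `v_k = |v_k| e^{i arg v_k}`. For any `f = d a` with `|a_k| = 1/√N`, the triangle inequality
gives `|v_k − f_k| ≥ ||v_k| − t|` with the common modulus `t = |d|/√N`, and equality holds when `f_k`
has the phase of `v_k`. So the problem reduces to fitting a constant `t` to the reals `|v_k|` in
least squares, whose solution is their mean `‖v‖₁/N`, with residual `‖v‖₂² − ‖v‖₁²/N`. -/

open Finset

namespace Complex

theorem norm_ofReal_mul_exp_I_mul (r θ : ℝ) : ‖(r : ℂ) * exp (I * θ)‖ = |r| := by
  rw [norm_mul, norm_real, Real.norm_eq_abs, mul_comm I, norm_exp_ofReal_mul_I, mul_one]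

theorem norm_sub_ofReal_mul_exp_arg (z : ℂ) (r : ℝ) :
    ‖z - r * exp (I * arg z)‖ = |‖z‖ - r| := by
  nth_rewrite 1 [← norm_mul_exp_arg_mul_I z]
  rw [mul_comm (arg z : ℂ) I, ← sub_mul, ← ofReal_sub]
  exact norm_ofReal_mul_exp_I_mul _ _

end Complex

namespace Finset

variable {ι : Type*} (s : Finset ι) (x : ι → ℝ)

theorem sum_sub_sq_eq_sum_sub_mean_sq_add (t : ℝ) :
    ∑ i ∈ s, (x i - t) ^ 2 =
      ∑ i ∈ s, (x i - (∑ j ∈ s, x j) / #s) ^ 2 + #s * (t - (∑ j ∈ s, x j) / #s) ^ 2 := by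
  rcases s.eq_empty_or_nonempty with rfl | hs
  · simp
  have hcard : (#s : ℝ) ≠ 0 := by exact_mod_cast hs.card_pos.ne'
  simp only [sub_sq, sum_add_distrib, sum_sub_distrib, ← sum_mul, ← mul_sum, sum_const,
    nsmul_eq_mul]
  field_simp
  ring

theorem sum_sub_mean_sq_le (t : ℝ) :
    ∑ i ∈ s, (x i - (∑ j ∈ s, x j) / #s) ^ 2 ≤ ∑ i ∈ s, (x i - t) ^ 2 := by
  rw [sum_sub_sq_eq_sum_sub_mean_sq_add s x t]
  exact le_add_of_nonneg_right (by positivity)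

theorem sum_sub_mean_sq :
    ∑ i ∈ s, (x i - (∑ j ∈ s, x j) / #s) ^ 2 = ∑ i ∈ s, x i ^ 2 - (∑ j ∈ s, x j) ^ 2 / #s := by
  have hmean : (#s : ℝ) * (0 - (∑ j ∈ s, x j) / #s) ^ 2 = (∑ j ∈ s, x j) ^ 2 / #s := by
    rcases eq_or_ne (#s : ℝ) 0 with h0 | h0
    · simp [h0]
    · field_simp
      ring
  have h := sum_sub_sq_eq_sum_sub_mean_sq_add s x 0
  simp only [sub_zero] at h
  linarith

end Finset

theorem stmt7_general {N : ℕ} (v fhat : Fin N → ℂ)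
    (hfhat : ∀ k, fhat k =
      ((((∑ j, ‖v j‖) / N : ℝ)) : ℂ) * Complex.exp (Complex.I * ((v k).arg : ℂ))) :
    (∃ d : ℝ, 0 ≤ d ∧ d = (∑ j, ‖v j‖) / Real.sqrt N ∧
      ∃ a : Fin N → ℂ, (∀ k, ‖a k‖ = 1 / Real.sqrt N) ∧
        (∀ k, a k = ((1 / Real.sqrt N : ℝ) : ℂ) * Complex.exp (Complex.I * ((v k).arg : ℂ))) ∧
        ∀ k, fhat k = (d : ℂ) * a k) ∧
    (∀ d : ℝ, 0 ≤ d → ∀ a : Fin N → ℂ, (∀ k, ‖a k‖ = 1 / Real.sqrt N) →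
      Real.sqrt (∑ k, ‖v k - fhat k‖ ^ 2) ≤
        Real.sqrt (∑ k, ‖v k - (d : ℂ) * a k‖ ^ 2)) ∧
    (∑ k, ‖v k - fhat k‖ ^ 2) =
      (∑ k, ‖v k‖ ^ 2) - (∑ j, ‖v j‖) ^ 2 / N := by
  have hcard : (#(univ : Finset (Fin N)) : ℝ) = N := by simp
  have herr : ∑ k, ‖v k - fhat k‖ ^ 2 = ∑ k, (‖v k‖ - (∑ j, ‖v j‖) / N) ^ 2 := by
    simp only [hfhat, Complex.norm_sub_ofReal_mul_exp_arg, sq_abs]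
  refine ⟨⟨_, by positivity, rfl, _, fun k => ?_, fun k => rfl, fun k => ?_⟩,
    fun d _ a ha => Real.sqrt_le_sqrt ?_, ?_⟩
  · rw [Complex.norm_ofReal_mul_exp_I_mul, abs_of_nonneg (by positivity)]
  · rw [hfhat k, ← mul_assoc, ← Complex.ofReal_mul, div_mul_div_comm, mul_one,
      Real.mul_self_sqrt N.cast_nonneg]
  · have hda : ∀ k, ‖(d : ℂ) * a k‖ = |d| * (1 / Real.sqrt N) := by
      simp [ha]
    calc ∑ k, ‖v k - fhat k‖ ^ 2 = ∑ k, (‖v k‖ - (∑ j, ‖v j‖) / N) ^ 2 := herr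
      _ ≤ ∑ k, (‖v k‖ - |d| * (1 / Real.sqrt N)) ^ 2 := by
        simpa only [hcard] using sum_sub_mean_sq_le univ (fun k => ‖v k‖) _
      _ ≤ ∑ k, ‖v k - (d : ℂ) * a k‖ ^ 2 := sum_le_sum fun k _ => by
        rw [← hda k, sq_le_sq]
        exact (abs_norm_sub_norm_le _ _).trans (le_abs_self _)
  · rw [herr, ← hcard]
    exact sum_sub_mean_sq univ fun k => ‖v k‖

/-- Solution of the single-RF-chain sub-rate problem (eqs. (29)–(31)): the vector
`f̂` with entries `f̂_k = (‖v‖₁/N)·e^{i·arg(v_k)}` has the form `d·a` with `d ≥ 0`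
and `|a_k| = 1/√N`, it minimizes `‖v − f‖₂` over all vectors of this form, and
`‖v − f̂‖₂² = ‖v‖₂² − ‖v‖₁²/N`. -/
theorem stmt7 {N : ℕ} (hN : 0 < N) (v fhat : Fin N → ℂ)
    (hfhat : ∀ k, fhat k =
      ((((∑ j, ‖v j‖) / N : ℝ)) : ℂ) * Complex.exp (Complex.I * ((v k).arg : ℂ))) :
    (∃ d : ℝ, 0 ≤ d ∧ d = (∑ j, ‖v j‖) / Real.sqrt N ∧
      ∃ a : Fin N → ℂ, (∀ k, ‖a k‖ = 1 / Real.sqrt N) ∧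
        (∀ k, a k = ((1 / Real.sqrt N : ℝ) : ℂ) * Complex.exp (Complex.I * ((v k).arg : ℂ))) ∧
        ∀ k, fhat k = (d : ℂ) * a k) ∧
    (∀ d : ℝ, 0 ≤ d → ∀ a : Fin N → ℂ, (∀ k, ‖a k‖ = 1 / Real.sqrt N) →
      Real.sqrt (∑ k, ‖v k - fhat k‖ ^ 2) ≤
        Real.sqrt (∑ k, ‖v k - (d : ℂ) * a k‖ ^ 2)) ∧
    (∑ k, ‖v k - fhat k‖ ^ 2) =
      (∑ k, ‖v k‖ ^ 2) - (∑ j, ‖v j‖) ^ 2 / N :=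
  stmt7_general v fhat hfhat
end

section
/- Let P be an N × N Hermitian positive semidefinite complex matrix with eigenvalues λ₁ ≥ λ₂ ≥ … ≥ λ_N (counted with multiplicity), let c > 0 be real, and let F be an N × k complex matrix with orthonormal columns, i.e. F* F = I_k. Then det(I_k + c · F* P F) is a real number and det(I_k + c · F* P F) ≤ Π_{j=1}^{k} (1 + c·λ_j). -/
/-!
Write `P = U D Uᴴ` and `W = Uᴴ F`, so that `W` again has orthonormal columns and
`I + c Fᴴ P F = Wᴴ (I + c D) W`. By Cauchy–Binet, `det (Wᴴ (I + c D) W)` is the average of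
the `k`-fold products `∏ (1 + c λ_{f i})` over the `k`-subsets `f` of the indices, weighted
by `|det W_f|²`; these weights sum to `det (Wᴴ W) = 1`, and since the `λ` are sorted and
nonnegative each product is at most `∏_{j ≤ k} (1 + c λ_j)`.
-/

open Matrix
open scoped ComplexOrder
open Finset Equiv

theorem Tuple.sort_comp_perm_of_strictMono {α : Type*} [LinearOrder α] {k : ℕ}
    {f : Fin k → α} (hf : StrictMono f) (σ : Perm (Fin k)) :
    Tuple.sort (f ∘ σ) = σ⁻¹ := by
  have h := Tuple.comp_perm_comp_sort_eq_comp_sort (f := f) (σ := σ)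
  rw [Tuple.sort_eq_refl_iff_monotone.mpr hf.monotone, coe_refl, Function.comp_id] at h
  exact eq_inv_of_mul_eq_one_right (Perm.ext fun i => congrFun (hf.injective.comp_left h) i)

theorem Finset.sum_filter_injective_eq_sum_strictMono_sum_perm {α M : Type*} [LinearOrder α]
    [Fintype α] [AddCommMonoid M] {k : ℕ} (g : (Fin k → α) → M) :
    ∑ p ∈ univ.filter Function.Injective, g p =
      ∑ f ∈ univ.filter StrictMono, ∑ σ : Perm (Fin k), g (f ∘ σ) := by
  rw [← sum_product']
  symm
  refine sum_nbij' (fun x => x.1 ∘ x.2) (fun p => (p ∘ Tuple.sort p, (Tuple.sort p)⁻¹))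
    ?_ ?_ ?_ ?_ (fun _ _ => rfl)
  · simp only [mem_product, mem_filter, mem_univ, true_and, and_true]
    exact fun x hx => hx.injective.comp x.2.injective
  · simp only [mem_product, mem_filter, mem_univ, true_and, and_true]
    exact fun p hp => (Tuple.monotone_sort p).strictMono_of_injective
      (hp.comp (Tuple.sort p).injective)
  · simp only [mem_product, mem_filter, mem_univ, true_and, and_true]
    intro x hx
    rw [Tuple.sort_comp_perm_of_strictMono hx, inv_inv]
    ext1 <;> simp [Function.comp_assoc]
  · intro p _
    simp [Function.comp_assoc]

theorem Fin.val_le_val_of_strictMono {k N : ℕ} {f : Fin k → Fin N} (hf : StrictMono f)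
    (i : Fin k) : (i : ℕ) ≤ f i := by
  have h : #(Iio i) ≤ #(Iio (f i)) :=
    card_le_card_of_injOn f (fun j hj => by simpa using hf (by simpa using hj))
      hf.injective.injOn
  simpa using h

namespace Matrix

variable {R : Type*} [CommRing R] {n : Type*} [Fintype n]

theorem det_mul_eq_sum_prod_mul_det_submatrix {m : Type*} [Fintype m] [DecidableEq m]
    (A : Matrix m n R) (B : Matrix n m R) :
    det (A * B) = ∑ p : m → n, (∏ i, B (p i) i) * det (A.submatrix id p) := by
  calc det (A * B)
      = ∑ p : m → n, ∑ σ : Perm m,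
          (Perm.sign σ : R) * ∏ i, A (σ i) (p i) * B (p i) i := by
        simp only [det_apply', mul_apply, prod_univ_sum, mul_sum, Fintype.piFinset_univ]
        rw [sum_comm]
    _ = _ := by
        simp only [det_apply', mul_sum, submatrix_apply, id_eq, prod_mul_distrib]
        exact sum_congr rfl fun p _ => sum_congr rfl fun σ _ => by ring

theorem det_mul_eq_sum_det_submatrix_mul_det_submatrix [LinearOrder n] {k : ℕ}
    (A : Matrix (Fin k) n R) (B : Matrix n (Fin k) R) :
    det (A * B) = ∑ f ∈ univ.filter StrictMono,
      det (A.submatrix id f) * det (B.submatrix f id) := by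
  classical
  have hnoninj : ∀ p : Fin k → n, ¬ Function.Injective p → det (A.submatrix id p) = 0 := by
    intro p hp
    obtain ⟨i, j, hpij, hij⟩ := Function.not_injective_iff.mp hp
    exact det_zero_of_column_eq hij fun l => by simp [hpij]
  rw [det_mul_eq_sum_prod_mul_det_submatrix, ← sum_filter_of_ne fun p _ h =>
      not_not.mp (mt (hnoninj p) (right_ne_zero_of_mul h)),
    sum_filter_injective_eq_sum_strictMono_sum_perm]
  refine sum_congr rfl fun f _ => ?_
  have hperm (σ : Perm (Fin k)) : A.submatrix id (f ∘ σ) = (A.submatrix id f).submatrix id σ :=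
    rfl
  simp_rw [hperm, det_permute']
  rw [mul_comm, det_apply' (B.submatrix f id), sum_mul]
  exact sum_congr rfl fun σ _ => by simp only [submatrix_apply, id_eq, Function.comp_apply]; ring

theorem det_conjTranspose_mul_diagonal_mul [LinearOrder n] {k : ℕ} (W : Matrix n (Fin k) ℂ)
    (d : n → ℝ) :
    det (Wᴴ * diagonal (fun i => (d i : ℂ)) * W) =
      ((∑ f ∈ univ.filter StrictMono,
        (∏ i, d (f i)) * Complex.normSq (det (W.submatrix f id)) : ℝ) : ℂ) := by
  rw [det_mul_eq_sum_det_submatrix_mul_det_submatrix]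
  push_cast
  refine sum_congr rfl fun f _ => ?_
  have hsub : (Wᴴ * diagonal (fun i => (d i : ℂ))).submatrix id f
      = (W.submatrix f id)ᴴ * diagonal (fun j => (d (f j) : ℂ)) := by
    ext i j
    simp [mul_apply, diagonal, conjTranspose_apply]
  rw [hsub, det_mul, det_conjTranspose, det_diagonal, Complex.normSq_eq_conj_mul_self,
    Complex.star_def]
  ring

theorem sum_normSq_det_submatrix_eq_one [LinearOrder n] {k : ℕ} {W : Matrix n (Fin k) ℂ}
    (hW : Wᴴ * W = 1) :
    ∑ f ∈ univ.filter StrictMono, Complex.normSq (det (W.submatrix f id)) = 1 := by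
  have h := det_conjTranspose_mul_diagonal_mul W 1
  simp only [Pi.one_apply, Complex.ofReal_one, diagonal_one, Matrix.mul_one, hW, det_one,
    prod_const_one, one_mul] at h
  exact_mod_cast h.symm

theorem one_add_smul_conjTranspose_mul_mul_eq_of_mul_conjTranspose_eq_one {m : Type*}
    [Fintype m] [DecidableEq m] [DecidableEq n] {U : Matrix n n ℂ} (hU : U * Uᴴ = 1)
    (D : Matrix n n ℂ) {F : Matrix n m ℂ} (hF : Fᴴ * F = 1) (c : ℂ) :
    1 + c • (Fᴴ * (U * D * Uᴴ) * F) = (Uᴴ * F)ᴴ * (1 + c • D) * (Uᴴ * F) := by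
  rw [conjTranspose_mul, conjTranspose_conjTranspose, Matrix.mul_add, Matrix.add_mul,
    Matrix.mul_one, Matrix.mul_assoc Fᴴ U, ← Matrix.mul_assoc U, hU, Matrix.one_mul, hF,
    Matrix.mul_smul, Matrix.smul_mul]
  simp only [Matrix.mul_assoc]

end Matrix

theorem Matrix.PosSemidef.nonneg_of_eq_unitary_mul_diagonal {n : Type*} [Fintype n]
    [DecidableEq n] {P U : Matrix n n ℂ} (hP : P.PosSemidef) (hU : U ∈ unitaryGroup n ℂ)
    {lam : n → ℝ} (hdecomp : P = U * diagonal (fun i => (lam i : ℂ)) * Uᴴ) (i : n) :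
    0 ≤ lam i := by
  have hUU : Uᴴ * U = 1 := mem_unitaryGroup_iff'.mp hU
  have hD : Uᴴ * P * U = diagonal (fun i => (lam i : ℂ)) := by
    rw [hdecomp, ← Matrix.mul_assoc, ← Matrix.mul_assoc, hUU, Matrix.one_mul, Matrix.mul_assoc,
      hUU, Matrix.mul_one]
  have h := posSemidef_diagonal_iff.mp (hD ▸ hP.conjTranspose_mul_mul_same U) i
  exact_mod_cast Complex.zero_le_real.mp h

theorem Finset.prod_comp_strictMono_le_prod_castLE {k N : ℕ} (hk : k ≤ N) {d : Fin N → ℝ}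
    (hd0 : ∀ i, 0 ≤ d i) (hd : Antitone d) {f : Fin k → Fin N} (hf : StrictMono f) :
    ∏ i, d (f i) ≤ ∏ i, d (Fin.castLE hk i) :=
  prod_le_prod (fun _ _ => hd0 _) fun i _ =>
    hd (Fin.le_def.mpr (Fin.val_le_val_of_strictMono hf i))

theorem Matrix.re_det_conjTranspose_mul_diagonal_mul_le {k N : ℕ} (hk : k ≤ N)
    {W : Matrix (Fin N) (Fin k) ℂ} (hW : Wᴴ * W = 1) {d : Fin N → ℝ} (hd0 : ∀ i, 0 ≤ d i)
    (hd : Antitone d) :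
    (det (Wᴴ * diagonal (fun i => (d i : ℂ)) * W)).re ≤ ∏ i, d (Fin.castLE hk i) := by
  rw [det_conjTranspose_mul_diagonal_mul, Complex.ofReal_re]
  calc ∑ f ∈ univ.filter StrictMono, (∏ i, d (f i)) * Complex.normSq (det (W.submatrix f id))
      ≤ ∑ f ∈ univ.filter StrictMono,
          (∏ i, d (Fin.castLE hk i)) * Complex.normSq (det (W.submatrix f id)) :=
        sum_le_sum fun f hf => mul_le_mul_of_nonneg_right
          (prod_comp_strictMono_le_prod_castLE hk hd0 hd (mem_filter.mp hf).2)
          (Complex.normSq_nonneg _)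
    _ = ∏ i, d (Fin.castLE hk i) := by
        rw [← mul_sum, sum_normSq_det_submatrix_eq_one hW, mul_one]

/-- Upper bound on the sub-rate of a semi-unitary precoder: if `P` is Hermitian
positive semidefinite with eigenvalues `λ₁ ≥ … ≥ λ_N` (eigendecomposition
`P = U·diag(λ)·U*` with `U` unitary), `c > 0`, and `F* F = I_k`, then
`det(I_k + c·F* P F)` is real and at most `Π_{j=1}^k (1 + c·λ_j)`. -/
theorem stmt12 {N k : ℕ} (hk : k ≤ N)
    (P : Matrix (Fin N) (Fin N) ℂ) (hP : P.PosSemidef)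
    (lam : Fin N → ℝ) (hsort : ∀ i j : Fin N, i ≤ j → lam j ≤ lam i)
    (U : Matrix (Fin N) (Fin N) ℂ) (hU : U ∈ Matrix.unitaryGroup (Fin N) ℂ)
    (hdecomp : P = U * Matrix.diagonal (fun i => (lam i : ℂ)) * Uᴴ)
    (c : ℝ) (hc : 0 < c)
    (F : Matrix (Fin N) (Fin k) ℂ) (hF : Fᴴ * F = 1) :
    ((1 + (c : ℂ) • (Fᴴ * P * F)).det).im = 0 ∧
    ((1 + (c : ℂ) • (Fᴴ * P * F)).det).re ≤
      ∏ j : Fin k, (1 + c * lam (Fin.castLE hk j)) := by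
  have hUU : U * Uᴴ = 1 := mem_unitaryGroup_iff.mp hU
  have hW : (Uᴴ * F)ᴴ * (Uᴴ * F) = 1 := by
    rw [conjTranspose_mul, conjTranspose_conjTranspose, Matrix.mul_assoc, ← Matrix.mul_assoc U,
      hUU, Matrix.one_mul, hF]
  have hdiag : 1 + (c : ℂ) • diagonal (fun i => (lam i : ℂ)) =
      diagonal (fun i => ((1 + c * lam i : ℝ) : ℂ)) := by
    rw [← diagonal_one, ← diagonal_smul, diagonal_add]
    push_cast
    rfl
  have hlam := hP.nonneg_of_eq_unitary_mul_diagonal hU hdecomp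
  have hd0 (i : Fin N) : 0 ≤ 1 + c * lam i := by have := hlam i; positivity
  have hd : Antitone fun i => 1 + c * lam i := fun i j hij =>
    add_le_add_right (mul_le_mul_of_nonneg_left (hsort i j hij) hc.le) 1
  rw [hdecomp, one_add_smul_conjTranspose_mul_mul_eq_of_mul_conjTranspose_eq_one hUU _ hF,
    hdiag]
  refine ⟨?_, re_det_conjTranspose_mul_diagonal_mul_le hk hW hd0 hd⟩
  rw [det_conjTranspose_mul_diagonal_mul]
  exact Complex.ofReal_im _
end
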